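/- Let Q < P be positive integers and η = iπQ/P. Let λ1,…,λP ∈ ℂ satisfy sinh(λ_{j+1} − λ_j + η) = 0 for j = 1,…,P, with the cyclic convention λ_{P+1} := λ_1. Then for every μ ∈ ℂ such that sinh(μ−λj) ≠ 0, sinh(μ−λj+η) ≠ 0 and sinh(λj−μ+η) ≠ 0 for all j, one has Σ_{j=1}^{P} t(μ,λj) = 0 and Σ_{j=1}^{P} t(λj,μ) = 0. -/

import Mathlib

open Complex Matrix BigOperators

noncomputable section

/-- Spin configurations of an `M`-site chain: the index set of the basis of `H = (ℂ²)^{⊗M}`. -/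
abbrev Spins (M : ℕ) := Fin M → Fin 2

/-- The XXZ R-matrix `R(λ)` on `ℂ² ⊗ ℂ²` (with anisotropy parameter `η`). -/
def Rmat (η lam : ℂ) : Matrix (Fin 2 × Fin 2) (Fin 2 × Fin 2) ℂ :=
  fun p q =>
    if p = q then (if p.1 = p.2 then Complex.sinh (lam + η) else Complex.sinh lam)
    else if p.1 = q.2 ∧ p.2 = q.1 then Complex.sinh η else 0

/-- The L-operator `L_m(λ) = R_{0m}(λ - ξ_m)` acting on `ℂ² ⊗ H`. -/
def Lop (M : ℕ) (η : ℂ) (ξ : Fin M → ℂ) (m : Fin M) (lam : ℂ) :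
    Matrix (Fin 2 × Spins M) (Fin 2 × Spins M) ℂ :=
  fun p q => Rmat η (lam - ξ m) (p.1, p.2 m) (q.1, q.2 m) *
    (if ∀ k, k ≠ m → p.2 k = q.2 k then 1 else 0)

/-- The monodromy matrix `T(λ) = L_M(λ) ⋯ L_2(λ) L_1(λ)` on `ℂ² ⊗ H`. -/
def Tmono (M : ℕ) (η : ℂ) (ξ : Fin M → ℂ) (lam : ℂ) :
    Matrix (Fin 2 × Spins M) (Fin 2 × Spins M) ℂ :=
  ((List.ofFn (fun m : Fin M => Lop M η ξ m lam)).reverse).prod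

/-- The operator `A(λ)` on `H`. -/
def Aop (M : ℕ) (η : ℂ) (ξ : Fin M → ℂ) (lam : ℂ) : Matrix (Spins M) (Spins M) ℂ :=
  fun s t => Tmono M η ξ lam (0, s) (0, t)

/-- The operator `B(λ)` on `H`. -/
def Bop (M : ℕ) (η : ℂ) (ξ : Fin M → ℂ) (lam : ℂ) : Matrix (Spins M) (Spins M) ℂ :=
  fun s t => Tmono M η ξ lam (0, s) (1, t)

/-- The operator `C(λ)` on `H`. -/
def Cop (M : ℕ) (η : ℂ) (ξ : Fin M → ℂ) (lam : ℂ) : Matrix (Spins M) (Spins M) ℂ :=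
  fun s t => Tmono M η ξ lam (1, s) (0, t)

/-- The operator `D(λ)` on `H`. -/
def Dop (M : ℕ) (η : ℂ) (ξ : Fin M → ℂ) (lam : ℂ) : Matrix (Spins M) (Spins M) ℂ :=
  fun s t => Tmono M η ξ lam (1, s) (1, t)

/-- The twisted transfer matrix `𝒯_κ(μ) = A(μ) + κ D(μ)`. -/
def transferK (M : ℕ) (η : ℂ) (ξ : Fin M → ℂ) (κ : ℂ) (μ : ℂ) : Matrix (Spins M) (Spins M) ℂ :=
  Aop M η ξ μ + κ • Dop M η ξ μ

/-- The transfer matrix `𝒯(μ) = A(μ) + D(μ)`. -/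
def transfer (M : ℕ) (η : ℂ) (ξ : Fin M → ℂ) (μ : ℂ) : Matrix (Spins M) (Spins M) ℂ :=
  transferK M η ξ 1 μ

/-- The reference state `|0⟩` with all spins up. -/
def vac (M : ℕ) : Spins M → ℂ := fun s => if s = fun _ => (0 : Fin 2) then 1 else 0

/-- `⟨0| X |0⟩`. -/
def expectVac {M : ℕ} (X : Matrix (Spins M) (Spins M) ℂ) : ℂ :=
  dotProduct (vac M) (X.mulVec (vac M))

/-- `B(λ_1) ⋯ B(λ_N)`. -/
def Bprod (M : ℕ) (η : ℂ) (ξ : Fin M → ℂ) {N : ℕ} (lam : Fin N → ℂ) :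
    Matrix (Spins M) (Spins M) ℂ :=
  (List.ofFn (fun j : Fin N => Bop M η ξ (lam j))).prod

/-- `C(λ_1) ⋯ C(λ_N)`. -/
def Cprod (M : ℕ) (η : ℂ) (ξ : Fin M → ℂ) {N : ℕ} (lam : Fin N → ℂ) :
    Matrix (Spins M) (Spins M) ℂ :=
  (List.ofFn (fun j : Fin N => Cop M η ξ (lam j))).prod

/-- `a(λ) = ∏_a sinh(λ - ξ_a + η)`. -/
def aF (M : ℕ) (η : ℂ) (ξ : Fin M → ℂ) (lam : ℂ) : ℂ := ∏ a, Complex.sinh (lam - ξ a + η)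

/-- `d(λ) = ∏_a sinh(λ - ξ_a)`. -/
def dF (M : ℕ) (ξ : Fin M → ℂ) (lam : ℂ) : ℂ := ∏ a, Complex.sinh (lam - ξ a)

/-- `Y_κ(μ|{λ})`. -/
def Yk (M : ℕ) (η : ℂ) (ξ : Fin M → ℂ) (κ : ℂ) {N : ℕ} (lam : Fin N → ℂ) (μ : ℂ) : ℂ :=
  aF M η ξ μ * ∏ k, Complex.sinh (lam k - μ + η) +
    κ * dF M ξ μ * ∏ k, Complex.sinh (lam k - μ - η)

/-- `Y_κ(λ_j|{λ})` regarded as a function of all the variables `λ_1, …, λ_N`. -/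
def YFull (M : ℕ) (η : ℂ) (ξ : Fin M → ℂ) (κ : ℂ) {N : ℕ} (v : Fin N → ℂ) (j : Fin N) : ℂ :=
  Yk M η ξ κ v (v j)

/-- The eigenvalue `τ_κ(μ|{λ})` of the twisted transfer matrix. -/
def tauK (M : ℕ) (η : ℂ) (ξ : Fin M → ℂ) (κ : ℂ) {N : ℕ} (lam : Fin N → ℂ) (μ : ℂ) : ℂ :=
  aF M η ξ μ * ∏ k, (Complex.sinh (lam k - μ + η) / Complex.sinh (lam k - μ)) +
    κ * dF M ξ μ * ∏ k, (Complex.sinh (μ - lam k + η) / Complex.sinh (μ - lam k))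

/-- `t(λ,μ) = sinh η / (sinh(λ-μ) sinh(λ-μ+η))`. -/
def tfun (η lam μ : ℂ) : ℂ :=
  Complex.sinh η / (Complex.sinh (lam - μ) * Complex.sinh (lam - μ + η))

/-- The matrix `Ω_κ({λ},{μ}|{ν})`. -/
def Omega (M : ℕ) (η : ℂ) (ξ : Fin M → ℂ) (κ : ℂ) {n n' : ℕ}
    (lam : Fin n → ℂ) (mu : Fin n → ℂ) (nu : Fin n' → ℂ) : Matrix (Fin n) (Fin n) ℂ :=
  fun j k =>
    aF M η ξ (mu k) * tfun η (lam j) (mu k) * ∏ a, Complex.sinh (nu a - mu k + η) -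
      κ * dF M ξ (mu k) * tfun η (mu k) (lam j) * ∏ a, Complex.sinh (nu a - mu k - η)

/-- Pauli matrix `σ^x`. -/
def sigmaX : Matrix (Fin 2) (Fin 2) ℂ := !![0, 1; 1, 0]
/-- Pauli matrix `σ^y`. -/
def sigmaY : Matrix (Fin 2) (Fin 2) ℂ := !![0, -Complex.I; Complex.I, 0]
/-- Pauli matrix `σ^z`. -/
def sigmaZ : Matrix (Fin 2) (Fin 2) ℂ := !![1, 0; 0, -1]

/-- The local operator acting as `P` on the `m`-th site and as identity elsewhere. -/
def pauliAt (M : ℕ) (P : Matrix (Fin 2) (Fin 2) ℂ) (m : Fin M) : Matrix (Spins M) (Spins M) ℂ :=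
  fun s t => P (s m) (t m) * (if ∀ k, k ≠ m → s k = t k then 1 else 0)

/-- The generating operator `Q^κ_{i,m} = ∏_{n=i}^{m} ((1+κ)/2 + ((1-κ)/2) σ^z_n)`
(sites are 1-based: site `n` is the tensor factor of index `n-1`). -/
def Qop (M : ℕ) (κ : ℂ) (i m : ℕ) : Matrix (Spins M) (Spins M) ℂ :=
  (((Finset.univ.filter (fun n : Fin M => i ≤ n.val + 1 ∧ n.val + 1 ≤ m)).sort (· ≤ ·)).map
    (fun n => ((1 + κ)/2) • (1 : Matrix (Spins M) (Spins M) ℂ) +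
      ((1 - κ)/2) • pauliAt M sigmaZ n)).prod

/-- Cyclic successor on `Fin M`. -/
def cyc {M : ℕ} (m : Fin M) : Fin M := ⟨(m.val + 1) % M, Nat.mod_lt _ m.pos⟩

/-! Writing `t` as a difference of hyperbolic cotangents,
`sinh η / (sinh x * sinh (x + η)) = coth x - coth (x + η)`, each sum telescopes around the
string: the string condition says `λ_{j+1} ≡ λ_j - η` modulo `iπ`, a period of `coth`. -/

/-- Division makes `coth z = 0` wherever `sinh z = 0`. -/
def coth (z : ℂ) : ℂ := cosh z / sinh z

lemma cosh_ne_zero_of_sinh_eq_zero {z : ℂ} (h : sinh z = 0) : cosh z ≠ 0 := by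
  intro hc
  simpa [h, hc] using cosh_sq z

lemma coth_eq_of_sinh_sub_eq_zero {a b : ℂ} (h : sinh (a - b) = 0) :
    coth a = coth b := by
  have hab : sinh a * cosh b = cosh a * sinh b := by
    rwa [sinh_sub, sub_eq_zero] at h
  by_cases hb : sinh b = 0
  · have ha : sinh a = 0 := by
      rw [hb, mul_zero, mul_eq_zero] at hab
      exact hab.resolve_right (cosh_ne_zero_of_sinh_eq_zero hb)
    simp [coth, ha, hb]
  · have ha : sinh a ≠ 0 := by
      intro ha
      rw [ha, zero_mul, zero_eq_mul] at hab
      exact hb (hab.resolve_left (cosh_ne_zero_of_sinh_eq_zero ha))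
    rw [coth, coth, div_eq_div_iff ha hb]
    linear_combination -hab

lemma sinh_div_sinh_mul_sinh_add {x e : ℂ} (hx : sinh x ≠ 0)
    (hxe : sinh (x + e) ≠ 0) :
    sinh e / (sinh x * sinh (x + e)) = coth x - coth (x + e) := by
  have h := sinh_sub (x + e) x
  rw [add_sub_cancel_left] at h
  rw [coth, coth]
  field_simp
  linear_combination h

lemma sum_sinh_div_sinh_mul_sinh_add_eq_zero {ι : Type*} [Fintype ι] (σ : Equiv.Perm ι)
    (x : ι → ℂ) (e : ℂ) (hx : ∀ j, sinh (x j) ≠ 0)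
    (hxe : ∀ j, sinh (x j + e) ≠ 0)
    (hσ : ∀ j, sinh (x (σ j) - (x j + e)) = 0) :
    ∑ j, sinh e / (sinh (x j) * sinh (x j + e)) = 0 := by
  have hshift : ∀ j, coth (x j + e) = coth (x (σ j)) := fun j =>
    (coth_eq_of_sinh_sub_eq_zero (hσ j)).symm
  simp only [sinh_div_sinh_mul_sinh_add (hx _) (hxe _), Finset.sum_sub_distrib, hshift,
    Equiv.sum_comp σ (fun j => coth (x j)), sub_self]

lemma cyc_eq_finRotate {M : ℕ} (m : Fin M) : cyc m = finRotate M m := by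
  cases M with
  | zero => exact m.elim0
  | succ n => ext; simp [cyc, finRotate_apply, Fin.val_add]

theorem string_sums_vanish_general (P : ℕ) (η : ℂ)
    (lam : Fin P → ℂ)
    (hstring : ∀ j : Fin P, Complex.sinh (lam (cyc j) - lam j + η) = 0)
    (μ : ℂ)
    (h1 : ∀ j : Fin P, Complex.sinh (μ - lam j) ≠ 0)
    (h2 : ∀ j : Fin P, Complex.sinh (μ - lam j + η) ≠ 0)
    (h3 : ∀ j : Fin P, Complex.sinh (lam j - μ + η) ≠ 0) :
    (∑ j : Fin P, tfun η μ (lam j) = 0) ∧ (∑ j : Fin P, tfun η (lam j) μ = 0) := by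
  have hstring' : ∀ j, sinh (lam (finRotate P j) - lam j + η) = 0 := fun j => by
    rw [← cyc_eq_finRotate]; exact hstring j
  have h1' : ∀ j, sinh (lam j - μ) ≠ 0 := fun j => by
    rw [← neg_sub, sinh_neg, neg_ne_zero]; exact h1 j
  constructor
  · refine sum_sinh_div_sinh_mul_sinh_add_eq_zero (finRotate P) (fun j => μ - lam j) η h1 h2
      fun j => ?_
    rw [show μ - lam (finRotate P j) - (μ - lam j + η) = -(lam (finRotate P j) - lam j + η) by
      ring, sinh_neg, hstring' j, neg_zero]
  · refine sum_sinh_div_sinh_mul_sinh_add_eq_zero (finRotate P).symm (fun j => lam j - μ) η h1'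
      h3 fun j => ?_
    obtain ⟨k, rfl⟩ := (finRotate P).surjective j
    rw [Equiv.symm_apply_apply, show lam k - μ - (lam (finRotate P k) - μ + η) =
      -(lam (finRotate P k) - lam k + η) by ring, sinh_neg, hstring' k, neg_zero]

/-- At a root of unity (`η = iπQ/P`), the sums of `t(μ,λ_j)` and `t(λ_j,μ)` over a `P`-string
`{λ_1,…,λ_P}` vanish. -/
theorem string_sums_vanish (Q P : ℕ) (hQ : 0 < Q) (hQP : Q < P) (η : ℂ)
    (hη : η = Complex.I * Real.pi * Q / P)
    (lam : Fin P → ℂ)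
    (hstring : ∀ j : Fin P, Complex.sinh (lam (cyc j) - lam j + η) = 0)
    (μ : ℂ)
    (h1 : ∀ j : Fin P, Complex.sinh (μ - lam j) ≠ 0)
    (h2 : ∀ j : Fin P, Complex.sinh (μ - lam j + η) ≠ 0)
    (h3 : ∀ j : Fin P, Complex.sinh (lam j - μ + η) ≠ 0) :
    (∑ j : Fin P, tfun η μ (lam j) = 0) ∧ (∑ j : Fin P, tfun η (lam j) μ = 0) :=
  string_sums_vanish_general P η lam hstring μ h1 h2 h3

end
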